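/- arXiv:1412.7070 — 3 statements merged into one kernel-verified Lean document; each statement's English description precedes it below -/
import Mathlib

section
/- Let J ⊆ ℝ be an interval, let A : ℝ → Matrix (Fin 2) (Fin 2) ℝ be continuous on J, and suppose that for each t ∈ J the off-diagonal entries (A t)₀₁ and (A t)₁₀ are positive. Let s ∈ J and let x : ℝ → (Fin 2 → ℝ) satisfy x'(t) = (A t)·x(t) for all t ∈ J (i.e. each component of x has derivative equal to the corresponding component of the matrix-vector product (A t)·x(t)). If both components of x(s) are nonnegative and x(s) ≠ 0, then for every t ∈ J with t > s, both components of x(t) are strictly positive. -/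
open Matrix Set Filter Real
open scoped Topology

/-- negative part -/
private noncomputable def np (a : ℝ) : ℝ := max (-a) 0

private lemma np_nonneg (a : ℝ) : 0 ≤ np a := le_max_right _ _

private lemma np_of_nonneg {a : ℝ} (h : 0 ≤ a) : np a = 0 :=
  max_eq_right (neg_nonpos.2 h)

private lemma np_of_nonpos {a : ℝ} (h : a ≤ 0) : np a = -a :=
  max_eq_left (neg_nonneg.2 h)

private lemma np_eq_zero {a : ℝ} (h : np a = 0) : 0 ≤ a := by
  by_contra hc
  push_neg at hc
  rw [np_of_nonpos hc.le] at h
  linarith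

private lemma np_add (a b : ℝ) : np (a + b) ≤ np a + np b :=
  max_le (by rw [neg_add]; exact add_le_add (le_max_left _ _) (le_max_left _ _))
    (add_nonneg (np_nonneg a) (np_nonneg b))

private lemma np_sub (a b : ℝ) : np a - np b ≤ np (a - b) := by
  have h := np_add (a - b) b
  rw [sub_add_cancel] at h
  linarith

private lemma np_le_abs (a : ℝ) : np a ≤ |a| :=
  max_le (neg_le_abs a) (abs_nonneg a)

private lemma np_mul {c : ℝ} (hc : 0 ≤ c) (a : ℝ) : np (c * a) = c * np a := by
  rcases le_total a 0 with h | h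
  · rw [np_of_nonpos h, np_of_nonpos (mul_nonpos_of_nonneg_of_nonpos hc h)]
    ring
  · rw [np_of_nonneg h, np_of_nonneg (mul_nonneg hc h), mul_zero]

private lemma np_continuous : Continuous np := continuous_neg.max continuous_const

/-- Nonnegativity is preserved forward in time for cooperative systems. -/
private lemma nonneg_aux (J : Set ℝ) (hJ : J.OrdConnected)
    (A : ℝ → Matrix (Fin 2) (Fin 2) ℝ) (hA : ContinuousOn A J)
    (hcoop : ∀ t ∈ J, 0 < A t 0 1 ∧ 0 < A t 1 0)
    (s : ℝ) (hs : s ∈ J)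
    (x : ℝ → Fin 2 → ℝ)
    (hx : ∀ t ∈ J, HasDerivWithinAt x ((A t).mulVec (x t)) J t)
    (h0 : 0 ≤ x s 0) (h1 : 0 ≤ x s 1) :
    ∀ T ∈ J, s ≤ T → ∀ u ∈ Icc s T, 0 ≤ x u 0 ∧ 0 ≤ x u 1 := by
  intro T hT hsT
  have hsub : Icc s T ⊆ J := hJ.out hs hT
  -- a bound on the entries of `A` over `Icc s T`
  have hFc : ContinuousOn (fun u => |A u 0 0| + |A u 0 1| + |A u 1 0| + |A u 1 1|) (Icc s T) := by
    have he : ∀ i j : Fin 2, ContinuousOn (fun u => A u i j) (Icc s T) :=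
      fun i j => ((continuous_apply_apply i j).comp_continuousOn hA).mono hsub
    exact (((((he 0 0).abs.add (he 0 1).abs)).add (he 1 0).abs).add (he 1 1).abs)
  obtain ⟨C, hC⟩ := isCompact_Icc.exists_bound_of_continuousOn hFc
  have hCe : ∀ u ∈ Icc s T, |A u 0 0| ≤ C ∧ |A u 0 1| ≤ C ∧ |A u 1 0| ≤ C ∧ |A u 1 1| ≤ C := by
    intro u hu
    have h := hC u hu
    rw [Real.norm_eq_abs] at h
    have h2 := le_trans (le_abs_self _) h
    have a00 := abs_nonneg (A u 0 0)
    have a01 := abs_nonneg (A u 0 1)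
    have a10 := abs_nonneg (A u 1 0)
    have a11 := abs_nonneg (A u 1 1)
    exact ⟨by linarith, by linarith, by linarith, by linarith⟩
  have hCnn : 0 ≤ C := by
    obtain ⟨h, _, _, _⟩ := hCe s (left_mem_Icc.2 hsT)
    exact le_trans (abs_nonneg _) h
  set f : ℝ → ℝ := fun u => np (x u 0) + np (x u 1) with hf
  have hfnn : ∀ u, 0 ≤ f u := fun u => add_nonneg (np_nonneg _) (np_nonneg _)
  have hxc : ContinuousOn x J := fun t ht => (hx t ht).continuousWithinAt
  have hfc : ContinuousOn f (Icc s T) := by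
    apply ContinuousOn.add
    · exact np_continuous.comp_continuousOn
        (((continuous_apply (0 : Fin 2)).comp_continuousOn hxc).mono hsub)
    · exact np_continuous.comp_continuousOn
        (((continuous_apply (1 : Fin 2)).comp_continuousOn hxc).mono hsub)
  have ha : f s ≤ 0 := by
    simp only [hf, np_of_nonneg h0, np_of_nonneg h1]
    norm_num
  have hbound : ∀ u ∈ Ico s T, (fun u => 2 * C * f u) u ≤ 2 * C * f u + 0 := by
    intro u _
    simp
  have hf' : ∀ t ∈ Ico s T, ∀ r, (fun u => 2 * C * f u) t < r →
      ∃ᶠ z in 𝓝[>] t, (z - t)⁻¹ * (f z - f t) < r := by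
    intro t ht r hr
    simp only at hr
    have htJ : t ∈ J := hsub ⟨ht.1, ht.2.le⟩
    have hIoc : Ioc t T ∈ 𝓝[>] t := Ioc_mem_nhdsGT_of_mem ⟨le_refl t, ht.2⟩
    have hJmem : J ∈ 𝓝[>] t :=
      mem_of_superset hIoc (fun z hz => hsub ⟨le_trans ht.1 hz.1.le, hz.2⟩)
    have hle : 𝓝[>] t ≤ 𝓝[J] t := nhdsWithin_le_of_mem hJmem
    have hle' : 𝓝[>] t ≤ 𝓝[J \ {t}] t := by
      apply nhdsWithin_le_of_mem
      apply mem_of_superset hIoc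
      intro z hz
      exact ⟨hsub ⟨le_trans ht.1 hz.1.le, hz.2⟩, ne_of_gt hz.1⟩
    set d : Fin 2 → ℝ := (A t).mulVec (x t) with hd
    have hdi : ∀ i : Fin 2, HasDerivWithinAt (fun z => x z i) (d i) J t :=
      fun i => hasDerivWithinAt_pi.1 (hx t htJ) i
    have hd0 : d 0 = A t 0 0 * x t 0 + A t 0 1 * x t 1 := by
      simp [hd, Matrix.mulVec, dotProduct, Fin.sum_univ_two]
    have hd1 : d 1 = A t 1 0 * x t 0 + A t 1 1 * x t 1 := by
      simp [hd, Matrix.mulVec, dotProduct, Fin.sum_univ_two]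
    obtain ⟨hc00, hc01, hc10, hc11⟩ := hCe t ⟨ht.1, ht.2.le⟩
    set L : Fin 2 → ℝ := fun i => if 0 < x t i then 0 else np (d i) with hL
    -- bound on L 0 + L 1
    have key : ∀ (p q : Fin 2), d p = A t p p * x t p + A t p q * x t q →
        |A t p p| ≤ C → 0 ≤ A t p q → |A t p q| ≤ C → ¬ 0 < x t p →
        np (d p) ≤ C * (np (x t p) + np (x t q)) := by
      intro p q hdp hcp hpq hcq hnp
      push_neg at hnp
      have h1 : np (A t p p * x t p) ≤ C * np (x t p) := by
        calc np (A t p p * x t p) ≤ |A t p p * x t p| := np_le_abs _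
          _ = |A t p p| * |x t p| := abs_mul _ _
          _ = |A t p p| * np (x t p) := by rw [abs_of_nonpos hnp, np_of_nonpos hnp]
          _ ≤ C * np (x t p) := mul_le_mul_of_nonneg_right hcp (np_nonneg _)
      have h2 : np (A t p q * x t q) ≤ C * np (x t q) := by
        rw [np_mul hpq]
        exact mul_le_mul_of_nonneg_right (le_trans (le_abs_self _) hcq) (np_nonneg _)
      calc np (d p) ≤ np (A t p p * x t p) + np (A t p q * x t q) := by
            rw [hdp]; exact np_add _ _
        _ ≤ C * (np (x t p) + np (x t q)) := by rw [mul_add]; exact add_le_add h1 h2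
    have hLb0 : L 0 ≤ C * f t := by
      by_cases hp : 0 < x t 0
      · have hz : L 0 = 0 := if_pos hp
        rw [hz]; exact mul_nonneg hCnn (hfnn t)
      · have hz : L 0 = np (d 0) := if_neg hp
        rw [hz]
        calc np (d 0) ≤ C * (np (x t 0) + np (x t 1)) :=
              key 0 1 hd0 hc00 (hcoop t htJ).1.le hc01 hp
          _ = C * f t := by simp only [hf]
    have hLb1 : L 1 ≤ C * f t := by
      by_cases hp : 0 < x t 1
      · have hz : L 1 = 0 := if_pos hp
        rw [hz]; exact mul_nonneg hCnn (hfnn t)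
      · have hz : L 1 = np (d 1) := if_neg hp
        rw [hz]
        calc np (d 1) ≤ C * (np (x t 1) + np (x t 0)) :=
              key 1 0 (by rw [hd1]; ring) hc11 (hcoop t htJ).2.le hc10 hp
          _ = C * f t := by simp only [hf]; ring
    have hL01 : L 0 + L 1 ≤ 2 * C * f t := by
      linarith
    set η : ℝ := (r - (L 0 + L 1)) / 2 with hη
    have hηpos : 0 < η := by
      rw [hη]; linarith
    have hev : ∀ i : Fin 2, ∀ᶠ z in 𝓝[>] t,
        (z - t)⁻¹ * (np (x z i) - np (x t i)) < L i + η := by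
      intro i
      by_cases hp : 0 < x t i
      · have hx_t : Tendsto (fun z => x z i) (𝓝[>] t) (𝓝 (x t i)) :=
          ((hdi i).continuousWithinAt).mono_left hle
        have h2 : ∀ᶠ z in 𝓝[>] t, 0 < x z i := hx_t.eventually_const_lt hp
        filter_upwards [h2] with z hz
        rw [np_of_nonneg hz.le, np_of_nonneg hp.le]
        simp only [hL, if_pos hp, sub_zero, mul_zero, zero_add]
        exact hηpos
      · have hslope : Tendsto (slope (fun z => x z i) t) (𝓝[>] t) (𝓝 (d i)) :=
          (hasDerivWithinAt_iff_tendsto_slope.1 (hdi i)).mono_left hle'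
        have hnp : Tendsto (fun z => np (slope (fun z => x z i) t z)) (𝓝[>] t)
            (𝓝 (np (d i))) := (np_continuous.tendsto _).comp hslope
        have hlt : np (d i) < L i + η := by
          simp only [hL, if_neg hp]
          linarith
        have h2 := hnp.eventually_lt_const hlt
        filter_upwards [h2, self_mem_nhdsWithin] with z hz hzt
        refine lt_of_le_of_lt ?_ hz
        push_neg at hp
        have h4 : (0:ℝ) < z - t := sub_pos.2 hzt
        have h3 : np (x z i) - np (x t i) ≤ np (x z i - x t i) := np_sub _ _
        calc (z - t)⁻¹ * (np (x z i) - np (x t i))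
            ≤ (z - t)⁻¹ * np (x z i - x t i) :=
              mul_le_mul_of_nonneg_left h3 (inv_nonneg.2 h4.le)
          _ = np ((z - t)⁻¹ * (x z i - x t i)) := (np_mul (inv_nonneg.2 h4.le) _).symm
          _ = np (slope (fun z => x z i) t z) := by
              rw [slope_def_field, div_eq_inv_mul]
    apply Eventually.frequently
    filter_upwards [hev 0, hev 1] with z h0' h1'
    have hq : (z - t)⁻¹ * (f z - f t) =
        (z - t)⁻¹ * (np (x z 0) - np (x t 0)) + (z - t)⁻¹ * (np (x z 1) - np (x t 1)) := by
      simp only [hf]; ring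
    rw [hq]
    have : L 0 + η + (L 1 + η) = r := by rw [hη]; ring
    linarith
  have key := le_gronwallBound_of_liminf_deriv_right_le hfc hf' ha hbound
  intro u hu
  have h := key u hu
  have hgb : gronwallBound 0 (2 * C) 0 (u - s) = 0 := by
    by_cases hc : (2 * C) = 0 <;> simp [gronwallBound, hc]
  rw [hgb] at h
  have e0 : np (x u 0) = 0 := by
    have := np_nonneg (x u 0); have := np_nonneg (x u 1)
    simp only [hf] at h
    linarith
  have e1 : np (x u 1) = 0 := by
    have := np_nonneg (x u 0); have := np_nonneg (x u 1)
    simp only [hf] at h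
    linarith
  exact ⟨np_eq_zero e0, np_eq_zero e1⟩

/-- A component that starts positive stays positive. -/
private lemma pos_persist {s T C : ℝ} (hst : s ≤ T) {a b y z : ℝ → ℝ}
    (hy : ∀ u ∈ Icc s T, HasDerivWithinAt y (a u * y u + b u * z u) (Icc s T) u)
    (hC : ∀ u ∈ Icc s T, -C ≤ a u) (hb : ∀ u ∈ Icc s T, 0 ≤ b u)
    (hynn : ∀ u ∈ Icc s T, 0 ≤ y u) (hznn : ∀ u ∈ Icc s T, 0 ≤ z u)
    (hpos : 0 < y s) : ∀ u ∈ Icc s T, 0 < y u := by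
  have hmono : MonotoneOn (fun u => y u * Real.exp (C * u)) (Icc s T) := by
    apply monotoneOn_of_hasDerivWithinAt_nonneg (convex_Icc s T)
      (f' := fun u => (a u * y u + b u * z u) * Real.exp (C * u) +
        y u * (Real.exp (C * u) * C))
    · exact ContinuousOn.mul (fun u hu => (hy u hu).continuousWithinAt)
        (Real.continuous_exp.comp (continuous_const.mul continuous_id)).continuousOn
    · intro u hu
      have hu' : u ∈ Icc s T := interior_subset hu
      have hexp : HasDerivWithinAt (fun w => Real.exp (C * w)) (Real.exp (C * u) * C)
          (interior (Icc s T)) u := by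
        have h := (((hasDerivAt_id u).const_mul C).exp).hasDerivWithinAt
          (s := interior (Icc s T))
        simpa using h
      exact ((hy u hu').mono interior_subset).mul hexp
    · intro u hu
      have hu' : u ∈ Icc s T := interior_subset hu
      have h1 := hC u hu'
      have h2 := hb u hu'
      have h3 := hynn u hu'
      have h4 := hznn u hu'
      have he : (0:ℝ) < Real.exp (C * u) := Real.exp_pos _
      nlinarith [mul_nonneg (mul_nonneg h2 h4) he.le,
        mul_nonneg (mul_nonneg (by linarith : (0:ℝ) ≤ a u + C) h3) he.le]
  intro u hu
  have hmle := hmono (left_mem_Icc.2 hst) hu hu.1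
  have h5 : 0 < y u * Real.exp (C * u) :=
    lt_of_lt_of_le (mul_pos hpos (Real.exp_pos _)) hmle
  nlinarith [Real.exp_pos (C * u)]

/-- A component coupled positively to a positive component becomes positive. -/
private lemma pos_ignite {s T C : ℝ} (hst : s < T) {a b y z : ℝ → ℝ}
    (hy : ∀ u ∈ Icc s T, HasDerivWithinAt y (a u * y u + b u * z u) (Icc s T) u)
    (hC : ∀ u ∈ Icc s T, -C ≤ a u) (hb : ∀ u ∈ Icc s T, 0 < b u)
    (hynn : ∀ u ∈ Icc s T, 0 ≤ y u) (hzpos : ∀ u ∈ Icc s T, 0 < z u) :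
    0 < y T := by
  have hmono : StrictMonoOn (fun u => y u * Real.exp (C * u)) (Icc s T) := by
    apply strictMonoOn_of_hasDerivWithinAt_pos (convex_Icc s T)
      (f' := fun u => (a u * y u + b u * z u) * Real.exp (C * u) +
        y u * (Real.exp (C * u) * C))
    · exact ContinuousOn.mul (fun u hu => (hy u hu).continuousWithinAt)
        (Real.continuous_exp.comp (continuous_const.mul continuous_id)).continuousOn
    · intro u hu
      have hu' : u ∈ Icc s T := interior_subset hu
      have hexp : HasDerivWithinAt (fun w => Real.exp (C * w)) (Real.exp (C * u) * C)
          (interior (Icc s T)) u := by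
        have h := (((hasDerivAt_id u).const_mul C).exp).hasDerivWithinAt
          (s := interior (Icc s T))
        simpa using h
      exact ((hy u hu').mono interior_subset).mul hexp
    · intro u hu
      have hu' : u ∈ Icc s T := interior_subset hu
      have h1 := hC u hu'
      have h2 := hb u hu'
      have h3 := hynn u hu'
      have h4 := hzpos u hu'
      have he : (0:ℝ) < Real.exp (C * u) := Real.exp_pos _
      nlinarith [mul_pos (mul_pos h2 h4) he,
        mul_nonneg (mul_nonneg (by linarith : (0:ℝ) ≤ a u + C) h3) he.le]
  have hlt := hmono (left_mem_Icc.2 hst.le) (right_mem_Icc.2 hst.le) hst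
  have hys := hynn s (left_mem_Icc.2 hst.le)
  have h5 : 0 < y T * Real.exp (C * T) := by
    have : 0 ≤ y s * Real.exp (C * s) := mul_nonneg hys (Real.exp_pos _).le
    simpa using lt_of_le_of_lt this hlt
  nlinarith [Real.exp_pos (C * T)]

theorem stmt_8 (J : Set ℝ) (hJ : J.OrdConnected)
    (A : ℝ → Matrix (Fin 2) (Fin 2) ℝ) (hA : ContinuousOn A J)
    (hcoop : ∀ t ∈ J, 0 < A t 0 1 ∧ 0 < A t 1 0)
    (s : ℝ) (hs : s ∈ J)
    (x : ℝ → Fin 2 → ℝ)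
    (hx : ∀ t ∈ J, HasDerivWithinAt x ((A t).mulVec (x t)) J t)
    (h0 : 0 ≤ x s 0) (h1 : 0 ≤ x s 1) (hne : x s ≠ 0) :
    ∀ t ∈ J, s < t → 0 < x t 0 ∧ 0 < x t 1 := by
  intro t ht hst
  have hsub : Icc s t ⊆ J := hJ.out hs ht
  have hnn := nonneg_aux J hJ A hA hcoop s hs x hx h0 h1 t ht hst.le
  -- bound on diagonal entries
  have hFc : ContinuousOn (fun u => |A u 0 0| + |A u 1 1|) (Icc s t) := by
    have he : ∀ i j : Fin 2, ContinuousOn (fun u => A u i j) (Icc s t) :=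
      fun i j => ((continuous_apply_apply i j).comp_continuousOn hA).mono hsub
    exact (he 0 0).abs.add (he 1 1).abs
  obtain ⟨C, hC⟩ := isCompact_Icc.exists_bound_of_continuousOn hFc
  have hC00 : ∀ u ∈ Icc s t, -C ≤ A u 0 0 := by
    intro u hu
    have h := hC u hu
    rw [Real.norm_eq_abs] at h
    have h2 := le_trans (le_abs_self _) h
    have := abs_nonneg (A u 1 1)
    have := neg_abs_le (A u 0 0)
    linarith
  have hC11 : ∀ u ∈ Icc s t, -C ≤ A u 1 1 := by
    intro u hu
    have h := hC u hu
    rw [Real.norm_eq_abs] at h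
    have h2 := le_trans (le_abs_self _) h
    have := abs_nonneg (A u 0 0)
    have := neg_abs_le (A u 1 1)
    linarith
  -- component derivatives within Icc s t
  have hpi : ∀ u ∈ Icc s t, ∀ i : Fin 2,
      HasDerivWithinAt (fun z => x z i) ((A u).mulVec (x u) i) (Icc s t) u :=
    fun u hu i => hasDerivWithinAt_pi.1 ((hx u (hsub hu)).mono hsub) i
  have hmv : ∀ u (v : Fin 2 → ℝ) (i : Fin 2),
      (A u).mulVec v i = A u i 0 * v 0 + A u i 1 * v 1 := by
    intro u v i
    simp [Matrix.mulVec, dotProduct, Fin.sum_univ_two]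
  have hd0 : ∀ u ∈ Icc s t, HasDerivWithinAt (fun z => x z 0)
      (A u 0 0 * x u 0 + A u 0 1 * x u 1) (Icc s t) u := by
    intro u hu
    have h := hpi u hu 0
    rwa [hmv] at h
  have hd0' : ∀ u ∈ Icc s t, HasDerivWithinAt (fun z => x z 0)
      (A u 0 0 * x u 0 + A u 0 1 * x u 1) (Icc s t) u := hd0
  have hd1 : ∀ u ∈ Icc s t, HasDerivWithinAt (fun z => x z 1)
      (A u 1 1 * x u 1 + A u 1 0 * x u 0) (Icc s t) u := by
    intro u hu
    have h := hpi u hu 1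
    rw [hmv] at h
    convert h using 1
    ring
  have hnn0 : ∀ u ∈ Icc s t, 0 ≤ x u 0 := fun u hu => (hnn u hu).1
  have hnn1 : ∀ u ∈ Icc s t, 0 ≤ x u 1 := fun u hu => (hnn u hu).2
  have hone : 0 < x s 0 ∨ 0 < x s 1 := by
    by_contra hcon
    push_neg at hcon
    apply hne
    funext k
    fin_cases k
    · exact le_antisymm hcon.1 h0
    · exact le_antisymm hcon.2 h1
  rcases hone with hp | hp
  · have hpos0 : ∀ u ∈ Icc s t, 0 < x u 0 :=
      pos_persist hst.le hd0 hC00 (fun u hu => (hcoop u (hsub hu)).1.le) hnn0 hnn1 hp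
    have hpos1 : 0 < x t 1 :=
      pos_ignite hst hd1 hC11 (fun u hu => (hcoop u (hsub hu)).2) hnn1 hpos0
    exact ⟨hpos0 t (right_mem_Icc.2 hst.le), hpos1⟩
  · have hpos1 : ∀ u ∈ Icc s t, 0 < x u 1 :=
      pos_persist hst.le hd1 hC11 (fun u hu => (hcoop u (hsub hu)).2.le) hnn1 hnn0 hp
    have hd0'' : ∀ u ∈ Icc s t, HasDerivWithinAt (fun z => x z 0)
        (A u 0 0 * x u 0 + A u 0 1 * x u 1) (Icc s t) u := hd0
    have hpos0 : 0 < x t 0 :=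
      pos_ignite hst hd0 hC00 (fun u hu => (hcoop u (hsub hu)).1) hnn0 hpos1
    exact ⟨hpos0, hpos1 t (right_mem_Icc.2 hst.le)⟩
end

section
/- Let c > 0, A⁽¹⁾ = [[−1, c],[1/(4c), −1]], and A⁽²⁾ = [[−1, 1/(4c)],[c, −1]]. Then the Poincaré matrix P = exp(A⁽²⁾)·exp(A⁽¹⁾) equals e^{−2}·[[cosh²(1/2) + (1/(4c²))·sinh²(1/2), (2c + 1/(2c))·cosh(1/2)·sinh(1/2)],[(2c + 1/(2c))·cosh(1/2)·sinh(1/2), cosh²(1/2) + 4c²·sinh²(1/2)]]. -/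
/-!
Each factor has the form `-1 + (1/2) • J` with `J` an involution (its off-diagonal entries
multiply to `1/4`). Splitting the exponential series of `t • J` into even and odd powers gives
`exp (t • J) = cosh t + sinh t • J`, so each factor is `e⁻¹ (cosh (1/2) + sinh (1/2) • J)`, and the
Poincaré matrix is the product of two explicit `2 × 2` matrices.
-/

open Matrix

namespace NormedSpace

theorem exp_algebraMap_add {A : Type*} [NormedRing A] [NormedAlgebra ℝ A] [CompleteSpace A]
    (r : ℝ) (x : A) : exp (algebraMap ℝ A r + x) = Real.exp r • exp x := by
  let _ : NormedAlgebra ℚ A := .restrictScalars ℚ ℝ A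
  rw [exp_add_of_commute (Algebra.commutes r x), ← algebraMap_exp_comm, Real.exp_eq_exp_ℝ,
    Algebra.smul_def]

theorem exp_smul_of_mul_self_eq_one {A : Type*} [Ring A] [Algebra ℝ A] [TopologicalSpace A]
    [IsTopologicalRing A] [ContinuousSMul ℝ A] [T2Space A] {J : A} (hJ : J * J = 1) (t : ℝ) :
    exp (t • J) = Real.cosh t • (1 : A) + Real.sinh t • J := by
  have hpow (n : ℕ) : J ^ (2 * n) = 1 := by rw [pow_mul, sq, hJ, one_pow]
  rw [exp_eq_tsum ℝ]
  refine HasSum.tsum_eq (HasSum.even_add_odd ?_ ?_)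
  · convert (Real.hasSum_cosh t).smul_const (1 : A) using 2 with n
    rw [smul_pow, hpow, smul_smul, div_eq_inv_mul]
  · convert (Real.hasSum_sinh t).smul_const J using 2 with n
    rw [smul_pow, pow_succ J, hpow, one_mul, smul_smul, div_eq_inv_mul]

end NormedSpace

open NormedSpace in
theorem Matrix.exp_fin_two_of_mul_eq_sq (d a b s : ℝ) (hs : s ≠ 0) (hab : a * b = s ^ 2) :
    exp !![d, a; b, d] =
      Real.exp d • !![Real.cosh s, a / s * Real.sinh s; b / s * Real.sinh s, Real.cosh s] := by
  set J : Matrix (Fin 2) (Fin 2) ℝ := !![0, a / s; b / s, 0]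
  have hJ : J * J = 1 := by
    rw [mul_fin_two, one_fin_two]
    field_simp
    simp [hab, hs]
  have hsplit : !![d, a; b, d] = algebraMap ℝ _ d + s • J := by
    rw [algebraMap_eq_diagonal]
    ext i j
    fin_cases i <;> fin_cases j <;> simp [J] <;> field_simp
  -- Matrices carry no global norm; any submultiplicative one makes them a Banach algebra.
  have hshift : exp (algebraMap ℝ _ d + s • J) = Real.exp d • exp (s • J) := by
    open scoped Matrix.Norms.Operator in exact exp_algebraMap_add d (s • J)
  rw [hsplit, hshift, exp_smul_of_mul_self_eq_one hJ]
  congr 1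
  ext i j
  fin_cases i <;> fin_cases j <;> simp [J] <;> ring

theorem stmt_17 (c : ℝ) (hc : 0 < c) :
    NormedSpace.exp (!![-1, 1/(4*c); c, -1] : Matrix (Fin 2) (Fin 2) ℝ)
        * NormedSpace.exp (!![-1, c; 1/(4*c), -1] : Matrix (Fin 2) (Fin 2) ℝ)
      = Real.exp (-2) •
        !![Real.cosh (1/2) ^ 2 + (1/(4*c^2)) * Real.sinh (1/2) ^ 2,
             (2*c + 1/(2*c)) * Real.cosh (1/2) * Real.sinh (1/2);
           (2*c + 1/(2*c)) * Real.cosh (1/2) * Real.sinh (1/2),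
             Real.cosh (1/2) ^ 2 + 4*c^2 * Real.sinh (1/2) ^ 2] := by
  have hc₀ : c ≠ 0 := hc.ne'
  have hprod₁ : 1 / (4 * c) * c = (1 / 2) ^ 2 := by field_simp; ring
  have hprod₂ : c * (1 / (4 * c)) = (1 / 2) ^ 2 := by field_simp; ring
  rw [exp_fin_two_of_mul_eq_sq _ _ _ _ (by norm_num) hprod₁,
    exp_fin_two_of_mul_eq_sq _ _ _ _ (by norm_num) hprod₂, smul_mul_smul, ← Real.exp_add,
    mul_fin_two]
  norm_num
  refine ⟨⟨?_, ?_⟩, ?_, ?_⟩ <;> field_simp <;> ring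
end

section
/- Let c > 0 satisfy cosh²(1/2) + 4c²·sinh²(1/2) > e² (for instance any c ≥ 5/2), and let P = exp(A⁽²⁾)·exp(A⁽¹⁾) where A⁽¹⁾ = [[−1, c],[1/(4c), −1]] and A⁽²⁾ = [[−1, 1/(4c)],[c, −1]]. Then there exist a real number μ > 1 and a vector w = (w₁, w₂) with w₁ > 0 and w₂ > 0 such that P·w = μ·w; consequently Pⁿ·w = μⁿ·w for all n ∈ ℕ and the Euclidean norms ‖Pⁿ·w‖ = μⁿ·‖w‖ tend to infinity as n → ∞, even though every real eigenvalue of A⁽¹⁾ and of A⁽²⁾ is negative (equal to −1/2 or −3/2). -/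
/-!
Each `A⁽ⁱ⁾` is `-1` plus an off-diagonal matrix `N` with `N² = 1/4`, so diagonalising gives
`exp A⁽ⁱ⁾ = e⁻¹ (cosh ½ + 2 sinh ½ N)`. Hence `P = e⁻² Q` for an entrywise positive symmetric `Q`
whose lower-right entry is `cosh² ½ + 4c² sinh² ½ > e²`, that is `P₂₂ > 1`. A real 2×2 matrix with
positive off-diagonal entries has an eigenvalue exceeding both diagonal entries, with a positive
eigenvector (explicitly, from the quadratic formula); this is `μ > 1`. The eigenvalues `λ` of
`A⁽ⁱ⁾` satisfy `(λ + 1)² = 1/4`, so they are `-1/2` and `-3/2`.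
-/

open Matrix Filter

theorem Matrix.exp_diagonal_fin_two (p q : ℝ) :
    NormedSpace.exp (diagonal ![p, q]) = !![Real.exp p, 0; 0, Real.exp q] := by
  rw [exp_diagonal]
  ext i j
  fin_cases i <;> fin_cases j <;> simp [Real.exp_eq_exp_ℝ]

theorem Matrix.exp_fin_two_eq_cosh_sinh (a x y s : ℝ) (hs : s ≠ 0) (hxy : x * y = s ^ 2) :
    NormedSpace.exp !![a, x; y, a] =
      Real.exp a • !![Real.cosh s, x * Real.sinh s / s; y * Real.sinh s / s, Real.cosh s] := by
  have hx : x ≠ 0 := left_ne_zero_of_mul (hxy ▸ pow_ne_zero 2 hs)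
  have hy : y = s ^ 2 / x := by field_simp; linarith
  subst hy
  let V : Matrix (Fin 2) (Fin 2) ℝ := !![x, x; s, -s]
  let W : Matrix (Fin 2) (Fin 2) ℝ := !![1 / (2 * x), 1 / (2 * s); 1 / (2 * x), -1 / (2 * s)]
  have hVW : V * W = 1 := by
    ext i j
    fin_cases i <;> fin_cases j <;> simp [V, W, mul_apply] <;> field_simp <;> ring
  have hV : IsUnit V := (isUnit_iff_isUnit_det V).2 (isUnit_det_of_right_inverse hVW)
  have hdiag : !![a, x; s ^ 2 / x, a] = V * diagonal ![a + s, a - s] * V⁻¹ := by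
    rw [inv_eq_right_inv hVW]
    ext i j
    fin_cases i <;> fin_cases j <;> simp [V, W, mul_apply, diagonal_fin_two] <;> field_simp <;> ring
  rw [hdiag, exp_conj V _ hV, exp_diagonal_fin_two, inv_eq_right_inv hVW, Real.cosh_eq,
    Real.sinh_eq]
  ext i j
  fin_cases i <;> fin_cases j <;>
    simp [V, W, mul_apply, Real.exp_add, Real.exp_sub, Real.exp_neg] <;> field_simp <;> ring

theorem Matrix.exists_pos_eigenvector_fin_two (M : Matrix (Fin 2) (Fin 2) ℝ)
    (h01 : 0 < M 0 1) (h10 : 0 < M 1 0) :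
    ∃ μ, max (M 0 0) (M 1 1) < μ ∧ ∃ w : Fin 2 → ℝ, 0 < w 0 ∧ 0 < w 1 ∧ M *ᵥ w = μ • w := by
  set r := √(((M 1 1 - M 0 0) / 2) ^ 2 + M 0 1 * M 1 0)
  have hr : r ^ 2 = ((M 1 1 - M 0 0) / 2) ^ 2 + M 0 1 * M 1 0 :=
    Real.sq_sqrt (by positivity)
  have hr_gt : |(M 1 1 - M 0 0) / 2| < r :=
    (Real.lt_sqrt (abs_nonneg _)).2 (by rw [sq_abs]; nlinarith)
  have hgap := abs_lt.1 hr_gt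
  refine ⟨(M 0 0 + M 1 1) / 2 + r, max_lt (by linarith) (by linarith),
    ![M 0 1, (M 1 1 - M 0 0) / 2 + r], h01, by simp only [cons_val_one, cons_val_fin_one]; linarith, ?_⟩
  rw [mulVec_fin_two, smul_vec2]
  simp only [cons_val_zero, cons_val_one, cons_val_fin_one]
  exact vec2_eq (by ring) (by linear_combination -hr)

theorem Matrix.pow_mulVec_of_mulVec_eq_smul {n R : Type*} [Fintype n] [DecidableEq n]
    [CommSemiring R] {M : Matrix n n R} {w : n → R} {μ : R} (h : M *ᵥ w = μ • w) (k : ℕ) :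
    (M ^ k) *ᵥ w = μ ^ k • w := by
  induction k with
  | zero => simp
  | succ k ih =>
    rw [pow_succ', ← mulVec_mulVec, ih, mulVec_smul, h, smul_smul, pow_succ]

theorem Matrix.sq_sub_eq_of_mulVec_eq_smul {R : Type*} [CommRing R] [IsDomain R]
    {a x y lam : R} {v : Fin 2 → R} (hv : v ≠ 0) (h : !![a, x; y, a] *ᵥ v = lam • v) :
    (lam - a) ^ 2 = x * y := by
  rw [mulVec_fin_two] at h
  have h0 := congrFun h 0
  have h1 := congrFun h 1
  simp only [of_apply, cons_val', cons_val_zero, cons_val_one, cons_val_fin_one, Pi.smul_apply,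
    smul_eq_mul] at h0 h1
  have key : ((lam - a) ^ 2 - x * y) • v = 0 := by
    ext i
    fin_cases i
    · simp only [Fin.zero_eta, Pi.smul_apply, smul_eq_mul, Pi.zero_apply]
      linear_combination (a - lam) * h0 - x * h1
    · simp only [Fin.mk_one, Pi.smul_apply, smul_eq_mul, Pi.zero_apply]
      linear_combination (a - lam) * h1 - y * h0
  exact sub_eq_zero.1 ((smul_eq_zero.1 key).resolve_right hv)

theorem Matrix.eigenvalue_neg_of_mul_lt_sq {a x y lam : ℝ} (ha : a < 0) (hxy : x * y < a ^ 2)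
    (h : ∃ v : Fin 2 → ℝ, v ≠ 0 ∧ !![a, x; y, a] *ᵥ v = lam • v) : lam < 0 := by
  obtain ⟨v, hv, hmul⟩ := h
  have := sq_sub_eq_of_mulVec_eq_smul hv hmul
  nlinarith

theorem exp_mul_exp_eq_exp_neg_two_smul {c : ℝ} (hc : c ≠ 0) :
    NormedSpace.exp !![-1, 1 / (4 * c); c, -1] * NormedSpace.exp !![-1, c; 1 / (4 * c), -1] =
      Real.exp (-2) • !![Real.cosh (1 / 2) ^ 2 + Real.sinh (1 / 2) ^ 2 / (4 * c ^ 2),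
        Real.cosh (1 / 2) * Real.sinh (1 / 2) * (2 * c + 1 / (2 * c));
        Real.cosh (1 / 2) * Real.sinh (1 / 2) * (2 * c + 1 / (2 * c)),
        Real.cosh (1 / 2) ^ 2 + 4 * c ^ 2 * Real.sinh (1 / 2) ^ 2] := by
  have hquarter : c * (1 / (4 * c)) = (1 / 2) ^ 2 := by field_simp; norm_num
  rw [exp_fin_two_eq_cosh_sinh _ _ _ (1 / 2) (by norm_num) (by rw [mul_comm, hquarter]),
    exp_fin_two_eq_cosh_sinh _ _ _ _ (by norm_num) hquarter, smul_mul_smul_comm,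
    ← Real.exp_add, show (-1 : ℝ) + -1 = -2 by norm_num]
  congr 1
  ext i j
  fin_cases i <;> fin_cases j <;> simp [mul_apply] <;> field_simp <;> ring

theorem stmt_18 (c : ℝ) (hc : 0 < c)
    (hbig : Real.cosh (1/2) ^ 2 + 4*c^2 * Real.sinh (1/2) ^ 2 > Real.exp 2)
    (P : Matrix (Fin 2) (Fin 2) ℝ)
    (hP : P = NormedSpace.exp (!![-1, 1/(4*c); c, -1] : Matrix (Fin 2) (Fin 2) ℝ)
        * NormedSpace.exp (!![-1, c; 1/(4*c), -1] : Matrix (Fin 2) (Fin 2) ℝ)) :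
    (∃ μ : ℝ, 1 < μ ∧ ∃ w : Fin 2 → ℝ, 0 < w 0 ∧ 0 < w 1 ∧
      P.mulVec w = μ • w ∧
      (∀ n : ℕ, (P ^ n).mulVec w = μ ^ n • w) ∧
      (∀ n : ℕ, ‖(WithLp.equiv 2 (Fin 2 → ℝ)).symm ((P ^ n).mulVec w)‖
          = μ ^ n * ‖(WithLp.equiv 2 (Fin 2 → ℝ)).symm w‖) ∧
      Tendsto (fun n : ℕ => ‖(WithLp.equiv 2 (Fin 2 → ℝ)).symm ((P ^ n).mulVec w)‖)
        atTop atTop) ∧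
    (∀ lam : ℝ,
      (∃ v : Fin 2 → ℝ, v ≠ 0 ∧
        (!![-1, c; 1/(4*c), -1] : Matrix (Fin 2) (Fin 2) ℝ).mulVec v = lam • v) →
      lam < 0) ∧
    (∀ lam : ℝ,
      (∃ v : Fin 2 → ℝ, v ≠ 0 ∧
        (!![-1, 1/(4*c); c, -1] : Matrix (Fin 2) (Fin 2) ℝ).mulVec v = lam • v) →
      lam < 0) := by
  rw [exp_mul_exp_eq_exp_neg_two_smul hc.ne'] at hP
  have h01 : 0 < P 0 1 := by rw [hP]; simp; positivity
  have h10 : 0 < P 1 0 := by rw [hP]; simp; positivity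
  have h11 : 1 < P 1 1 := calc
    1 = Real.exp (-2) * Real.exp 2 := by rw [← Real.exp_add]; norm_num
    _ < Real.exp (-2) * (Real.cosh (1 / 2) ^ 2 + 4 * c ^ 2 * Real.sinh (1 / 2) ^ 2) :=
      mul_lt_mul_of_pos_left hbig (Real.exp_pos _)
    _ = P 1 1 := by rw [hP]; rfl
  obtain ⟨μ, hμ, w, hw0, hw1, hPw⟩ := P.exists_pos_eigenvector_fin_two h01 h10
  have hμ1 : 1 < μ := (lt_max_of_lt_right h11).trans hμ
  have hpow := pow_mulVec_of_mulVec_eq_smul hPw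
  have hnorm (n : ℕ) : ‖(WithLp.equiv 2 (Fin 2 → ℝ)).symm ((P ^ n).mulVec w)‖
      = μ ^ n * ‖(WithLp.equiv 2 (Fin 2 → ℝ)).symm w‖ := by
    rw [hpow, WithLp.equiv_symm_apply, WithLp.toLp_smul, norm_smul,
      Real.norm_of_nonneg (by positivity)]
  have hw : 0 < ‖(WithLp.equiv 2 (Fin 2 → ℝ)).symm w‖ := by
    rw [norm_pos_iff, WithLp.equiv_symm_apply, ne_eq, WithLp.toLp_eq_zero]
    exact ne_of_apply_ne (· 0) hw0.ne'
  have hquarter : c * (1 / (4 * c)) < (-1) ^ 2 := by field_simp; norm_num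
  refine ⟨⟨μ, hμ1, w, hw0, hw1, hPw, hpow, hnorm, ?_⟩,
    fun _ => eigenvalue_neg_of_mul_lt_sq (by norm_num) hquarter,
    fun _ => eigenvalue_neg_of_mul_lt_sq (by norm_num) (by rwa [mul_comm])⟩
  simp_rw [hnorm]
  exact (tendsto_pow_atTop_atTop_of_one_lt hμ1).atTop_mul_const hw
end
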